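/- arXiv:1312.5881 — 2 statements merged into one kernel-verified Lean document; each statement's English description precedes it below -/
import Mathlib

section
/- For every real x ≥ 1, e^x · Γ(x+1) / (x^x · √(2πx) · exp(ψ'(x+1/2)/12)) < exp(1/(240x^3)). -/
/-!
Let `R t = log Γ(t + 1) - (t log t - t + log (2πt) / 2)` be the Stirling remainder. Then
`R t - R (t + 1) = (t + 1/2) log (1 + 1/t) - 1 = ∑_{k ≥ 1} (2t + 1)^(-2k) / (2k + 1)`, and comparing
the tail `k ≥ 2` with a geometric series bounds this by
`1 / (12 (t + 1/2)²) + 1 / (240 t³) - 1 / (240 (t + 1)³)`, strictly. Since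
`ψ'(y) - ψ'(y + 1) = 1 / y²`, the function `G t = R t - ψ'(t + 1/2) / 12 - 1 / (240 t³)` increases
strictly under `t ↦ t + 1`. Log-convexity of `Γ` gives `ψ' ≥ 0`, so `G (t + N) ≤ R (t + N)`,
and, together with Stirling's formula for factorials, `limsup R (t + N) ≤ 0`.
Hence `G t < G (t + 1) ≤ 0`.
-/

open Real Filter Topology

noncomputable def trigamma (x : ℝ) : ℝ :=
  iteratedDeriv 2 (fun y => Real.log (Real.Gamma y)) x

open Set

namespace Real

theorem analyticAt_Gamma {x : ℝ} (hx : 0 < x) : AnalyticAt ℝ Gamma x := by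
  have hC : AnalyticAt ℂ Complex.Gamma (x : ℂ) := by
    refine Complex.analyticAt_iff_eventually_differentiableAt.mpr ?_
    filter_upwards [(Complex.continuous_re.isOpen_preimage _ isOpen_Ioi).mem_nhds
      (by simpa using hx)] with s hs
    refine Complex.differentiableAt_Gamma s fun m hm => ?_
    have : (0 : ℝ) < -m := by simpa [hm] using hs
    linarith [m.cast_nonneg (α := ℝ)]
  simpa [Complex.Gamma_ofReal] using hC.re_ofReal

theorem analyticAt_log_Gamma {x : ℝ} (hx : 0 < x) :
    AnalyticAt ℝ (fun y => log (Gamma y)) x :=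
  (analyticAt_Gamma hx).log (Gamma_pos_of_pos hx)

theorem deriv_log_Gamma_add_one {x : ℝ} (hx : 0 < x) :
    deriv (fun y => log (Gamma y)) (x + 1) = deriv (fun y => log (Gamma y)) x + x⁻¹ := by
  rw [← deriv_comp_add_const, ← deriv_log,
    ← deriv_fun_add (analyticAt_log_Gamma hx).differentiableAt (differentiableAt_log hx.ne')]
  refine EventuallyEq.deriv_eq ?_
  filter_upwards [eventually_gt_nhds hx] with y hy
  rw [Gamma_add_one hy.ne', log_mul hy.ne' (Gamma_pos_of_pos hy).ne', add_comm]

theorem log_Gamma_add_le {s θ : ℝ} (hs : 0 < s) (hθ₀ : 0 ≤ θ) (hθ₁ : θ ≤ 1) :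
    log (Gamma (s + θ)) ≤ log (Gamma s) + θ * log s := by
  have h := convexOn_log_Gamma.2 (mem_Ioi.mpr hs) (mem_Ioi.mpr (by linarith : 0 < s + 1))
    (by linarith : 0 ≤ 1 - θ) hθ₀ (by ring)
  simp only [smul_eq_mul, Function.comp_apply] at h
  rw [Gamma_add_one hs.ne', log_mul hs.ne' (Gamma_pos_of_pos hs).ne'] at h
  rw [show (1 - θ) * s + θ * (s + 1) = s + θ by ring] at h
  linarith

end Real

theorem trigamma_eq_deriv_deriv (x : ℝ) :
    trigamma x = deriv (deriv fun y => log (Gamma y)) x := by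
  rw [trigamma, iteratedDeriv_succ, iteratedDeriv_one]

theorem trigamma_add_one {x : ℝ} (hx : 0 < x) : trigamma (x + 1) = trigamma x - (x ^ 2)⁻¹ := by
  have hd : DifferentiableAt ℝ (deriv fun y => log (Gamma y)) x :=
    (analyticAt_log_Gamma hx).deriv.differentiableAt
  rw [trigamma_eq_deriv_deriv, trigamma_eq_deriv_deriv, ← deriv_comp_add_const,
    EventuallyEq.deriv_eq (f := fun y => deriv (fun y => log (Gamma y)) y + y⁻¹), deriv_fun_add hd
      (differentiableAt_inv hx.ne'), deriv_inv, sub_eq_add_neg]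
  filter_upwards [eventually_gt_nhds hx] with y hy using deriv_log_Gamma_add_one hy

theorem trigamma_nonneg {x : ℝ} (hx : 0 < x) : 0 ≤ trigamma x := by
  have hmono : MonotoneOn (deriv fun y => log (Gamma y)) (Ioi 0) :=
    convexOn_log_Gamma.monotoneOn_deriv fun y hy => (analyticAt_log_Gamma hy).differentiableAt
  rw [trigamma_eq_deriv_deriv, ← derivWithin_of_isOpen isOpen_Ioi hx]
  exact hmono.derivWithin_nonneg

noncomputable def stirlingRemainder (t : ℝ) : ℝ :=
  log (Gamma (t + 1)) - (t * log t - t + log (2 * π * t) / 2)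

theorem stirlingRemainder_sub_stirlingRemainder_add_one {t : ℝ} (ht : 0 < t) :
    stirlingRemainder t - stirlingRemainder (t + 1) = (t + 1 / 2) * log (1 + t⁻¹) - 1 := by
  have h2π : 2 * π ≠ 0 := by positivity
  have ht1 : t + 1 ≠ 0 := by positivity
  rw [stirlingRemainder, stirlingRemainder, Gamma_add_one ht1,
    log_mul ht1 (Gamma_pos_of_pos (by positivity)).ne', log_mul h2π ht.ne', log_mul h2π ht1,
    show 1 + t⁻¹ = (t + 1) / t by field_simp, log_div ht1 ht.ne']
  ring

theorem stirlingRemainder_natCast {n : ℕ} (hn : n ≠ 0) :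
    stirlingRemainder n = log (Stirling.stirlingSeq n) - log √π := by
  have hn₀ : (0 : ℝ) < n := by positivity
  rw [stirlingRemainder, Gamma_nat_eq_factorial, Stirling.log_stirlingSeq_formula,
    log_sqrt pi_pos.le, log_div hn₀.ne' (exp_ne_zero 1), log_exp,
    show 2 * π * n = 2 * n * π by ring,
    log_mul (by positivity) pi_pos.ne']
  ring

theorem tendsto_stirlingRemainder_natCast :
    Tendsto (fun n : ℕ => stirlingRemainder n) atTop (𝓝 0) := by
  have h := ((continuousAt_log (sqrt_pos.mpr pi_pos).ne').tendsto.comp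
    Stirling.tendsto_stirlingSeq_sqrt_pi).sub_const (log √π)
  rw [sub_self] at h
  refine h.congr' ?_
  filter_upwards [eventually_ne_atTop 0] with n hn
  exact (stirlingRemainder_natCast hn).symm

/-- From `s` to `s + θ`, `log Γ(· + 1)` grows by at most `θ log (s + 1)` (log-convexity), while the
Stirling approximation grows by at least `θ log s - θ² / (s + θ)`. -/
theorem stirlingRemainder_add_le {s θ : ℝ} (hs : 0 < s) (hθ₀ : 0 ≤ θ) (hθ₁ : θ ≤ 1) :
    stirlingRemainder (s + θ) ≤ stirlingRemainder s + 2 / s := by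
  have hsθ : 0 < s + θ := by linarith
  have hΓ := log_Gamma_add_le (s := s + 1) (by linarith) hθ₀ hθ₁
  have hlog : log s ≤ log (s + θ) := log_le_log hs (by linarith)
  have hlog_sub : θ / (s + θ) ≤ log (s + θ) - log s := by
    have := log_le_sub_one_of_pos (div_pos hs hsθ)
    rw [log_div hs.ne' hsθ.ne'] at this
    have : s / (s + θ) - 1 = -(θ / (s + θ)) := by field_simp; ring
    linarith
  have hlog_succ : log (s + 1) - log s ≤ 1 / s := by
    have := log_le_sub_one_of_pos (div_pos (by linarith : 0 < s + 1) hs)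
    rw [log_div (by linarith) hs.ne'] at this
    have : (s + 1) / s - 1 = 1 / s := by field_simp; ring
    linarith
  have h1 : s * (θ / (s + θ)) ≤ s * (log (s + θ) - log s) :=
    mul_le_mul_of_nonneg_left hlog_sub hs.le
  have h2 : θ * (log (s + 1) - log s) ≤ 1 / s :=
    (mul_le_of_le_one_left (sub_nonneg.mpr (log_le_log hs (by linarith))) hθ₁).trans hlog_succ
  have h3 : θ - s * (θ / (s + θ)) ≤ 1 / s := by
    rw [show θ - s * (θ / (s + θ)) = θ ^ 2 / (s + θ) by field_simp; ring]
    gcongr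
    · nlinarith
    · linarith
  have h2π : 2 * π ≠ 0 := by positivity
  rw [stirlingRemainder, stirlingRemainder, show s + θ + 1 = s + 1 + θ by ring,
    log_mul h2π hs.ne', log_mul h2π hsθ.ne']
  rw [mul_sub] at h1 h2
  linear_combination hΓ + h2 + mul_le_mul_of_nonneg_left hlog hθ₀ + h1 + h3 + hlog / 2

theorem le_zero_of_forall_le_stirlingRemainder_add_nat {c x : ℝ} (hx : 1 ≤ x)
    (h : ∀ N : ℕ, c ≤ stirlingRemainder (x + N)) : c ≤ 0 := by
  set m := ⌊x⌋₊
  have hm : 1 ≤ m := Nat.le_floor (by exact_mod_cast hx)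
  have hθ₀ : 0 ≤ x - m := sub_nonneg.mpr (Nat.floor_le (by linarith))
  have hθ₁ : x - m ≤ 1 := by linarith [Nat.lt_floor_add_one x]
  have hu : Tendsto (fun n : ℕ => stirlingRemainder n + 2 / n) atTop (𝓝 0) := by
    simpa using tendsto_stirlingRemainder_natCast.add (tendsto_const_div_atTop_nhds_zero_nat 2)
  refine ge_of_tendsto' (hu.comp (tendsto_add_atTop_nat m)) fun N => (h N).trans ?_
  have hs : (0 : ℝ) < (N + m : ℕ) := by positivity
  have hR := stirlingRemainder_add_le hs hθ₀ hθ₁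
  rwa [show ((N + m : ℕ) : ℝ) + (x - m) = x + N by push_cast; ring] at hR

theorem hasSum_mul_log_one_add_inv_sub_one {t : ℝ} (ht : 0 < t) :
    HasSum (fun k : ℕ => (1 / (2 * k + 3)) * (1 / (2 * t + 1)) ^ (2 * k + 2))
      ((t + 1 / 2) * log (1 + t⁻¹) - 1) := by
  have h := (hasSum_log_one_add_inv ht).mul_left (t + 1 / 2)
  rw [← hasSum_nat_add_iff' 1] at h
  set u := 1 / (2 * t + 1) with hu
  have hterm (k : ℕ) :
      (t + 1 / 2) * (2 * (1 / (2 * (k : ℝ) + 1)) * u ^ (2 * k + 1)) =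
        1 / (2 * k + 1) * u ^ (2 * k) := by
    have : (t + 1 / 2) * 2 * u = 1 := by rw [hu]; field_simp
    rw [pow_succ]
    linear_combination (1 / (2 * (k : ℝ) + 1) * u ^ (2 * k)) * this
  simp only [Finset.range_one, Finset.sum_singleton, hterm] at h
  rw [show 1 / (2 * ((0 : ℕ) : ℝ) + 1) * u ^ (2 * 0) = 1 by simp] at h
  refine h.congr_fun fun k => ?_
  push_cast
  ring

theorem mul_log_one_add_inv_sub_one_lt {t : ℝ} (ht : 0 < t) :
    (t + 1 / 2) * log (1 + t⁻¹) - 1 <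
      1 / (12 * (t + 1 / 2) ^ 2) + (1 / (240 * t ^ 3) - 1 / (240 * (t + 1) ^ 3)) := by
  have h := hasSum_mul_log_one_add_inv_sub_one ht
  rw [← hasSum_nat_add_iff' 1] at h
  simp only [Finset.range_one, Finset.sum_singleton] at h
  set u := 1 / (2 * t + 1) with hu
  have hu₀ : 0 < u := by positivity
  have hu₁ : u ^ 2 < 1 := by
    rw [hu, div_pow, one_pow, div_lt_one (by positivity)]
    nlinarith
  have hgeo := (hasSum_geometric_of_lt_one (sq_nonneg u) hu₁).mul_left (u ^ 4 / 5)
  have hle := hasSum_le (fun k => ?_) h hgeo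
  · have h₀ : 1 / (2 * ((0 : ℕ) : ℝ) + 3) * u ^ (2 * 0 + 2) = 1 / (12 * (t + 1 / 2) ^ 2) := by
      rw [hu]; norm_num; field_simp; ring
    have hp : 0 < t * (t + 1) := by positivity
    have htail : u ^ 4 / 5 * (1 - u ^ 2)⁻¹ = 1 / (20 * (t * (t + 1)) * (2 * t + 1) ^ 2) := by
      rw [hu, show 1 - (1 / (2 * t + 1)) ^ 2 = 4 * (t * (t + 1)) / (2 * t + 1) ^ 2 by
        field_simp; ring]
      field_simp
      ring
    have hcube : 1 / (240 * t ^ 3) - 1 / (240 * (t + 1) ^ 3) =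
        (3 * (t * (t + 1)) + 1) / (240 * (t * (t + 1)) ^ 3) := by
      field_simp; ring
    have hlt : 1 / (20 * (t * (t + 1)) * (2 * t + 1) ^ 2) <
        (3 * (t * (t + 1)) + 1) / (240 * (t * (t + 1)) ^ 3) := by
      rw [div_lt_div_iff₀ (by positivity) (by positivity),
        show (2 * t + 1) ^ 2 = 4 * (t * (t + 1)) + 1 by ring]
      nlinarith [pow_pos hp 3, pow_pos hp 2]
    rw [h₀, htail] at hle
    linarith
  · rw [show u ^ 4 / 5 * (u ^ 2) ^ k = 1 / 5 * u ^ (2 * (k + 1) + 2) by ring]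
    refine mul_le_mul_of_nonneg_right ?_ (pow_nonneg hu₀.le _)
    gcongr
    push_cast
    linarith [k.cast_nonneg (α := ℝ)]

noncomputable def stirlingGap (t : ℝ) : ℝ :=
  stirlingRemainder t - (trigamma (t + 1 / 2) / 12 + 1 / (240 * t ^ 3))

theorem stirlingGap_lt_add_one {t : ℝ} (ht : 0 < t) : stirlingGap t < stirlingGap (t + 1) := by
  have hR := stirlingRemainder_sub_stirlingRemainder_add_one ht
  have hψ := trigamma_add_one (x := t + 1 / 2) (by linarith)
  have hg := mul_log_one_add_inv_sub_one_lt ht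
  rw [show t + 1 / 2 + 1 = t + 1 + 1 / 2 by ring] at hψ
  rw [stirlingGap, stirlingGap, hψ]
  have : ((t + 1 / 2) ^ 2)⁻¹ / 12 = 1 / (12 * (t + 1 / 2) ^ 2) := by field_simp
  linarith

theorem stirlingGap_le_add_nat {t : ℝ} (ht : 0 < t) (N : ℕ) :
    stirlingGap t ≤ stirlingGap (t + N) := by
  induction N with
  | zero => simp
  | succ N ih =>
    push_cast
    rw [← add_assoc]
    exact ih.trans (stirlingGap_lt_add_one (by positivity)).le

theorem stirlingGap_le_stirlingRemainder {t : ℝ} (ht : 0 < t) :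
    stirlingGap t ≤ stirlingRemainder t := by
  have := trigamma_nonneg (x := t + 1 / 2) (by linarith)
  rw [stirlingGap]
  linarith [show 0 < 1 / (240 * t ^ 3) by positivity]

theorem stirlingGap_neg {x : ℝ} (hx : 0 < x) : stirlingGap x < 0 := by
  refine (stirlingGap_lt_add_one hx).trans_le <|
    le_zero_of_forall_le_stirlingRemainder_add_nat (x := x + 1) (by linarith) fun N => ?_
  exact (stirlingGap_le_add_nat (by linarith) N).trans
    (stirlingGap_le_stirlingRemainder (by positivity))

theorem exp_stirlingRemainder {x : ℝ} (hx : 0 < x) :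
    exp (stirlingRemainder x) = exp x * Gamma (x + 1) / (x ^ x * √(2 * π * x)) := by
  have hG : 0 < Gamma (x + 1) := Gamma_pos_of_pos (by linarith)
  rw [stirlingRemainder, exp_sub, exp_add, exp_sub, exp_log hG, mul_comm x, ← rpow_def_of_pos hx,
    ← log_sqrt (by positivity), exp_log (by positivity)]
  field_simp

theorem stmt2 (x : ℝ) (hx : 1 ≤ x) :
    Real.exp x * Real.Gamma (x + 1) /
      (x ^ x * Real.sqrt (2 * Real.pi * x) * Real.exp (trigamma (x + 1/2) / 12)) <
    Real.exp (1 / (240 * x ^ 3)) := by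
  have hx₀ : 0 < x := by linarith
  rw [← div_div, ← exp_stirlingRemainder hx₀, ← exp_sub, exp_lt_exp]
  have := stirlingGap_neg hx₀
  rw [stirlingGap] at this
  linarith
end

section
/- For x > 0, 1/x + 1/(2x^2) + 1/(6x^3) − 1/(30x^5) < ψ'(x) < 1/x + 1/(2x^2) + 1/(6x^3) − 1/(30x^5) + 1/(42x^7). -/
/-!
Gauss's product for `Γ` gives, for `x > 0`,
`log Γ(x) + log x = ∑ₙ (x log (1 + 1/(n+1)) - log (1 + x/(n+1)))`, and differentiating twice
termwise gives `ψ'(x) = ∑ₙ 1/(x+n)²`. Hence `ψ'(x) = 1/x² + ψ'(x+1)` and `ψ'(x+N) → 0`.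
If `F` vanishes at infinity and `F(y) - F(y+1) < 1/y²` for all `y > 0`, then `ψ' - F` decreases
strictly along `x, x+1, x+2, …` towards `0`, so `F < ψ'`; symmetrically for upper bounds. Both
rational bounds satisfy these difference inequalities with explicit positive remainders.
-/

open Real Filter Topology Asymptotics

theorem iteratedDeriv_two_eq_of_hasDerivAt {f f' : ℝ → ℝ} {x a : ℝ}
    (hf : ∀ᶠ y in 𝓝 x, HasDerivAt f (f' y) y) (hf' : HasDerivAt f' a x) :
    iteratedDeriv 2 f x = a := by
  rw [iteratedDeriv_succ, iteratedDeriv_one]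
  exact (hf'.congr_of_eventuallyEq (hf.mono fun y hy => hy.deriv)).deriv

theorem pos_of_add_one_lt_of_tendsto {φ : ℝ → ℝ} {x : ℝ} (hx : 0 < x)
    (hstep : ∀ y, 0 < y → φ (y + 1) < φ y)
    (hlim : Tendsto (fun N : ℕ => φ (x + N)) atTop (𝓝 0)) : 0 < φ x := by
  have hanti : StrictAnti fun N : ℕ => φ (x + N) :=
    strictAnti_nat_of_succ_lt fun N => by
      simpa [add_assoc] using hstep (x + N) (by positivity)
  calc 0 ≤ φ (x + (1 : ℕ)) := hanti.antitone.le_of_tendsto hlim 1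
    _ < φ (x + (0 : ℕ)) := hanti zero_lt_one
    _ = φ x := by simp

theorem tendsto_one_div_mul_pow_atTop {c : ℝ} (hc : 0 < c) {k : ℕ} (hk : k ≠ 0) :
    Tendsto (fun y : ℝ => 1 / (c * y ^ k)) atTop (𝓝 0) := by
  simpa only [one_div, Function.comp_def] using
    tendsto_inv_atTop_zero.comp ((tendsto_pow_atTop hk).const_mul_atTop hc)

theorem summable_one_div_add_sq {x : ℝ} (hx : 0 < x) :
    Summable fun n : ℕ => 1 / (x + n) ^ 2 := by
  refine ((Real.summable_one_div_nat_add_rpow x 2).mpr one_lt_two).congr fun n => ?_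
  rw [abs_of_pos (by positivity), add_comm, ← Real.rpow_natCast]
  norm_num

theorem summable_one_div_nat_add_one_sq : Summable fun n : ℕ => 1 / ((n : ℝ) + 1) ^ 2 :=
  (summable_one_div_add_sq one_pos).congr fun n => by ring

theorem abs_log_one_add_inv_sub_inv_le {m y B : ℝ} (hm : 0 < m) (hy : 0 ≤ y) (hyB : y ≤ B) :
    |log (1 + 1 / m) - 1 / (y + m)| ≤ (B + 1) / m ^ 2 := by
  have hlog_le : log (1 + 1 / m) ≤ 1 / m := by
    linarith [log_le_sub_one_of_pos (show 0 < 1 + 1 / m by positivity)]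
  have hlog_ge : 1 / (m + 1) ≤ log (1 + 1 / m) := by
    have := one_sub_inv_le_log_of_pos (show 0 < 1 + 1 / m by positivity)
    convert this using 1
    field_simp
    ring
  have h1 : 1 / (B + m) ≤ 1 / (y + m) := one_div_le_one_div_of_le (by positivity) (by linarith)
  have h2 : 1 / (y + m) ≤ 1 / m := one_div_le_one_div_of_le hm (by linarith)
  have hB : 0 ≤ B := hy.trans hyB
  have h3 : 1 / m - 1 / (B + m) ≤ (B + 1) / m ^ 2 := by
    rw [div_sub_div _ _ hm.ne' (by positivity), div_le_div_iff₀ (by positivity) (by positivity)]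
    nlinarith [mul_nonneg hB hm.le, mul_nonneg (mul_nonneg hB hm.le) hm.le, mul_pos hm hm]
  have h4 : 1 / m - 1 / (m + 1) ≤ (B + 1) / m ^ 2 := by
    rw [div_sub_div _ _ hm.ne' (by positivity), div_le_div_iff₀ (by positivity) (by positivity)]
    nlinarith [mul_nonneg hB hm.le, mul_pos hm hm, mul_nonneg (mul_nonneg hB hm.le) hm.le]
  rw [abs_le]
  constructor <;> linarith

noncomputable def logGammaTerm (n : ℕ) (y : ℝ) : ℝ :=
  y * log (1 + 1 / (n + 1)) - log (1 + y / (n + 1))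

noncomputable def digammaTerm (n : ℕ) (y : ℝ) : ℝ :=
  log (1 + 1 / (n + 1)) - 1 / (y + (n + 1))

theorem logGammaTerm_one (n : ℕ) : logGammaTerm n 1 = 0 := by
  simp [logGammaTerm]

theorem hasDerivAt_logGammaTerm (n : ℕ) {y : ℝ} (hy : 0 < y) :
    HasDerivAt (logGammaTerm n) (digammaTerm n y) y := by
  have h := (hasDerivAt_mul_const (log (1 + 1 / ((n : ℝ) + 1)))).sub
    ((((hasDerivAt_id y).div_const ((n : ℝ) + 1)).const_add 1).log (by positivity))
  refine h.congr_deriv ?_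
  simp only [digammaTerm, id]
  field_simp
  ring

theorem hasDerivAt_digammaTerm (n : ℕ) {y : ℝ} (hy : 0 < y) :
    HasDerivAt (digammaTerm n) (1 / (y + (n + 1)) ^ 2) y := by
  have h := (((hasDerivAt_id y).add_const ((n : ℝ) + 1)).inv (by positivity)).const_sub
    (log (1 + 1 / ((n : ℝ) + 1)))
  unfold digammaTerm
  simp only [id, one_div] at h ⊢
  refine h.congr_deriv ?_
  ring

theorem norm_digammaTerm_le (n : ℕ) {y B : ℝ} (hy : 0 < y) (hyB : y ≤ B) :
    ‖digammaTerm n y‖ ≤ (B + 1) * (1 / ((n : ℝ) + 1) ^ 2) := by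
  rw [Real.norm_eq_abs, mul_one_div]
  exact abs_log_one_add_inv_sub_inv_le (by positivity) hy.le hyB

theorem summable_logGammaTerm {x : ℝ} (hx : 0 < x) : Summable fun n => logGammaTerm n x :=
  summable_of_summable_hasDerivAt_of_isPreconnected
    (summable_one_div_nat_add_one_sq.mul_left (x + 1 + 1)) isOpen_Ioo isPreconnected_Ioo
    (fun n _ hy => hasDerivAt_logGammaTerm n hy.1)
    (fun n _ hy => norm_digammaTerm_le n hy.1 hy.2.le)
    (show (1 : ℝ) ∈ Set.Ioo 0 (x + 1) from ⟨one_pos, by linarith⟩)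
    (by simp [logGammaTerm_one]) (show x ∈ Set.Ioo 0 (x + 1) from ⟨hx, lt_add_one x⟩)

theorem hasDerivAt_tsum_logGammaTerm {x : ℝ} (hx : 0 < x) :
    HasDerivAt (fun y => ∑' n, logGammaTerm n y) (∑' n, digammaTerm n x) x :=
  hasDerivAt_tsum_of_isPreconnected
    (summable_one_div_nat_add_one_sq.mul_left (x + 1 + 1)) isOpen_Ioo isPreconnected_Ioo
    (fun n _ hy => hasDerivAt_logGammaTerm n hy.1)
    (fun n _ hy => norm_digammaTerm_le n hy.1 hy.2.le)
    (show x ∈ Set.Ioo 0 (x + 1) from ⟨hx, lt_add_one x⟩) (summable_logGammaTerm hx)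
    (show x ∈ Set.Ioo 0 (x + 1) from ⟨hx, lt_add_one x⟩)

theorem hasDerivAt_tsum_digammaTerm {x : ℝ} (hx : 0 < x) :
    HasDerivAt (fun y => ∑' n, digammaTerm n y) (∑' n : ℕ, 1 / (x + (n + 1)) ^ 2) x :=
  hasDerivAt_tsum_of_isPreconnected summable_one_div_nat_add_one_sq isOpen_Ioi isPreconnected_Ioi
    (fun n _ hy => hasDerivAt_digammaTerm n hy)
    (fun n y (hy : 0 < y) => by
      rw [Real.norm_eq_abs, abs_of_pos (by positivity)]
      exact one_div_le_one_div_of_le (by positivity)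
        (pow_le_pow_left₀ (by positivity) (by linarith) 2))
    (Set.mem_Ioi.mpr hx)
    (summable_one_div_nat_add_one_sq.mul_left (x + 1) |>.of_norm_bounded
      fun n => norm_digammaTerm_le n hx le_rfl)
    (Set.mem_Ioi.mpr hx)

theorem sum_range_logGammaTerm {x : ℝ} (hx : 0 < x) (N : ℕ) :
    ∑ n ∈ Finset.range N, logGammaTerm n x =
      BohrMollerup.logGammaSeq x N + log x + x * (log (N + 1) - log N) := by
  induction N with
  | zero => simp [BohrMollerup.logGammaSeq]
  | succ N ih =>
    have hN : (0 : ℝ) < N + 1 := by positivity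
    have hlog_one_add (a : ℝ) (ha : 0 < a) :
        log (1 + a / (N + 1)) = log (a + (N + 1)) - log (N + 1) := by
      rw [← log_div (by positivity) hN.ne']
      congr 1
      field_simp
      ring
    rw [Finset.sum_range_succ, ih, logGammaTerm, hlog_one_add 1 one_pos, hlog_one_add x hx]
    simp only [BohrMollerup.logGammaSeq, Finset.sum_range_succ, Nat.factorial_succ]
    push_cast
    rw [log_mul hN.ne' (by positivity)]
    ring_nf

theorem hasSum_logGammaTerm {x : ℝ} (hx : 0 < x) :
    HasSum (fun n => logGammaTerm n x) (log (Gamma x) + log x) := by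
  refine (summable_logGammaTerm hx).hasSum_iff_tendsto_nat.mpr ?_
  have h := ((BohrMollerup.tendsto_log_gamma hx).add_const (log x)).add
    (tendsto_log_nat_add_one_sub_log.const_mul x)
  rw [mul_zero, add_zero] at h
  simpa only [sum_range_logGammaTerm hx] using h

theorem hasDerivAt_log_Gamma {x : ℝ} (hx : 0 < x) :
    HasDerivAt (fun y => log (Gamma y)) (∑' n, digammaTerm n x - x⁻¹) x := by
  have h := (hasDerivAt_tsum_logGammaTerm hx).sub (hasDerivAt_log hx.ne')
  refine h.congr_of_eventuallyEq ?_
  filter_upwards [Ioi_mem_nhds hx] with y (hy : 0 < y)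
  simp [(hasSum_logGammaTerm hy).tsum_eq]

theorem trigamma_eq_tsum {x : ℝ} (hx : 0 < x) : trigamma x = ∑' n : ℕ, 1 / (x + n) ^ 2 := by
  have h := (hasDerivAt_tsum_digammaTerm hx).sub (hasDerivAt_inv hx.ne')
  rw [trigamma, iteratedDeriv_two_eq_of_hasDerivAt
    (eventually_of_mem (Ioi_mem_nhds hx) fun y hy => hasDerivAt_log_Gamma hy) h,
    (summable_one_div_add_sq hx).tsum_eq_zero_add]
  push_cast
  ring

theorem trigamma_eq_one_div_sq_add {x : ℝ} (hx : 0 < x) :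
    trigamma x = 1 / x ^ 2 + trigamma (x + 1) := by
  rw [trigamma_eq_tsum hx, trigamma_eq_tsum (by positivity),
    (summable_one_div_add_sq hx).tsum_eq_zero_add]
  push_cast
  simp only [add_zero, add_assoc, add_comm (1 : ℝ)]

theorem tendsto_trigamma_add_nat {x : ℝ} (hx : 0 < x) :
    Tendsto (fun N : ℕ => trigamma (x + N)) atTop (𝓝 0) := by
  refine (tendsto_sum_nat_add fun n : ℕ => 1 / (x + n) ^ 2).congr fun N => ?_
  rw [trigamma_eq_tsum (by positivity)]
  push_cast
  simp only [add_assoc, add_comm (N : ℝ)]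

theorem lt_trigamma_of_sub_add_one_lt {F : ℝ → ℝ}
    (hF : ∀ y, 0 < y → F y - F (y + 1) < 1 / y ^ 2)
    (hlim : Tendsto F atTop (𝓝 0)) {x : ℝ} (hx : 0 < x) : F x < trigamma x := by
  have hN := tendsto_atTop_add_const_left _ x tendsto_natCast_atTop_atTop
  have h := pos_of_add_one_lt_of_tendsto (φ := fun y => trigamma y - F y) hx
    (fun y hy => by linarith [hF y hy, trigamma_eq_one_div_sq_add hy])
    (by simpa using (tendsto_trigamma_add_nat hx).sub (hlim.comp hN))
  linarith

theorem trigamma_lt_of_lt_sub_add_one {F : ℝ → ℝ}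
    (hF : ∀ y, 0 < y → 1 / y ^ 2 < F y - F (y + 1))
    (hlim : Tendsto F atTop (𝓝 0)) {x : ℝ} (hx : 0 < x) : trigamma x < F x := by
  have hN := tendsto_atTop_add_const_left _ x tendsto_natCast_atTop_atTop
  have h := pos_of_add_one_lt_of_tendsto (φ := fun y => F y - trigamma y) hx
    (fun y hy => by linarith [hF y hy, trigamma_eq_one_div_sq_add hy])
    (by simpa using (hlim.comp hN).sub (tendsto_trigamma_add_nat hx))
  linarith

noncomputable def trigammaLowerBound (x : ℝ) : ℝ :=
  1 / x + 1 / (2 * x ^ 2) + 1 / (6 * x ^ 3) - 1 / (30 * x ^ 5)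

noncomputable def trigammaUpperBound (x : ℝ) : ℝ :=
  trigammaLowerBound x + 1 / (42 * x ^ 7)

theorem trigammaLowerBound_sub_add_one_lt {x : ℝ} (hx : 0 < x) :
    trigammaLowerBound x - trigammaLowerBound (x + 1) < 1 / x ^ 2 := by
  have hx1 : x + 1 ≠ 0 := by positivity
  have key : trigammaLowerBound x - trigammaLowerBound (x + 1) =
      1 / x ^ 2 - (1 + 5 * x + 5 * x ^ 2) / (30 * x ^ 5 * (x + 1) ^ 5) := by
    simp only [trigammaLowerBound]
    field_simp
    ring
  have hrem : 0 < (1 + 5 * x + 5 * x ^ 2) / (30 * x ^ 5 * (x + 1) ^ 5) := by positivity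
  linarith

theorem one_div_sq_lt_trigammaUpperBound_sub_add_one {x : ℝ} (hx : 0 < x) :
    1 / x ^ 2 < trigammaUpperBound x - trigammaUpperBound (x + 1) := by
  have hx1 : x + 1 ≠ 0 := by positivity
  have key : trigammaUpperBound x - trigammaUpperBound (x + 1) = 1 / x ^ 2 +
      (5 + 35 * x + 98 * x ^ 2 + 126 * x ^ 3 + 63 * x ^ 4) / (210 * x ^ 7 * (x + 1) ^ 7) := by
    simp only [trigammaUpperBound, trigammaLowerBound]
    field_simp
    ring
  have hrem : 0 < (5 + 35 * x + 98 * x ^ 2 + 126 * x ^ 3 + 63 * x ^ 4) /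
      (210 * x ^ 7 * (x + 1) ^ 7) := by positivity
  linarith

theorem tendsto_trigammaLowerBound_atTop : Tendsto trigammaLowerBound atTop (𝓝 0) := by
  have h := (((tendsto_one_div_mul_pow_atTop one_pos one_ne_zero).add
    (tendsto_one_div_mul_pow_atTop two_pos two_ne_zero)).add
    (tendsto_one_div_mul_pow_atTop (c := 6) (k := 3) (by norm_num) (by norm_num))).sub
    (tendsto_one_div_mul_pow_atTop (c := 30) (k := 5) (by norm_num) (by norm_num))
  simp only [one_mul, pow_one, add_zero, sub_zero] at h
  exact h

theorem tendsto_trigammaUpperBound_atTop : Tendsto trigammaUpperBound atTop (𝓝 0) := by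
  have h := tendsto_trigammaLowerBound_atTop.add
    (tendsto_one_div_mul_pow_atTop (c := 42) (k := 7) (by norm_num) (by norm_num))
  rw [add_zero] at h
  exact h

theorem stmt14 (x : ℝ) (hx : 0 < x) :
    1/x + 1/(2*x^2) + 1/(6*x^3) - 1/(30*x^5) < trigamma x ∧
    trigamma x < 1/x + 1/(2*x^2) + 1/(6*x^3) - 1/(30*x^5) + 1/(42*x^7) :=
  ⟨lt_trigamma_of_sub_add_one_lt (fun _ hy => trigammaLowerBound_sub_add_one_lt hy)
      tendsto_trigammaLowerBound_atTop hx,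
    trigamma_lt_of_lt_sub_add_one (fun _ hy => one_div_sq_lt_trigammaUpperBound_sub_add_one hy)
      tendsto_trigammaUpperBound_atTop hx⟩
end
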